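/- For all positive integers m and n, the set B = {(i,j) ∈ V(HD(m,n)) : i + j = m − 1} ∪ {(i,j) ∈ V(HD(m,n)) : j = i + m} has cardinality m + n and is a zero forcing set of the Hopi rectangle graph HD(m,n); in particular Z(HD(m,n)) ≤ m + n. -/

import Mathlib

/-- One round of the zero forcing color change rule, where vertices in the
leak set `L` are not permitted to force. A blue vertex `u ∉ L` with exactly one
non-blue neighbor `v` turns `v` blue. -/
def zfStep {V : Type*} (G : SimpleGraph V) (L : Set V) (B : Set V) : Set V :=
  B ∪ {v | ∃ u ∈ B, u ∉ L ∧ G.Adj u v ∧ ∀ w, G.Adj u w → w ∉ B → w = v}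

/-- The set of vertices eventually colored blue starting from `B`, with leaks `L`. -/
def zfClosure {V : Type*} (G : SimpleGraph V) (L : Set V) (B : Set V) : Set V :=
  ⋃ k, (zfStep G L)^[k] B

/-- `B` is an `ℓ`-leaky forcing set: for every leak set of size at most `ℓ`,
starting with exactly `B` blue, eventually every vertex becomes blue. -/
def IsLeakyForcingSet {V : Type*} (G : SimpleGraph V) (ℓ : ℕ) (B : Set V) : Prop :=
  ∀ L : Set V, L.ncard ≤ ℓ → zfClosure G L B = Set.univ

/-- `B` is a zero forcing set (no leaks). -/
def IsZeroForcingSet {V : Type*} (G : SimpleGraph V) (B : Set V) : Prop :=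
  zfClosure G (∅ : Set V) B = Set.univ

/-- The zero forcing number `Z(G)`: minimum cardinality of a zero forcing set. -/
noncomputable def zfNumber {V : Type*} (G : SimpleGraph V) : ℕ :=
  sInf (Set.ncard '' {B : Set V | IsZeroForcingSet G B})

/-- The `ℓ`-leaky forcing number `Z_(ℓ)(G)`: minimum cardinality of an
`ℓ`-leaky forcing set. -/
noncomputable def leakyNumber {V : Type*} (G : SimpleGraph V) (ℓ : ℕ) : ℕ :=
  sInf (Set.ncard '' {B : Set V | IsLeakyForcingSet G ℓ B})

/-- The vertex set of the Hopi rectangle graph of order `(m,n)`: the set of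
integer lattice points `(i,j)` with `m-1 ≤ i+j ≤ 2n+m-1` and `|i-j| ≤ m`
(realized as a `Finset` by filtering a sufficiently large box). -/
noncomputable def HDverts (m n : ℕ) : Finset (ℤ × ℤ) :=
  (Finset.Icc (-2 : ℤ) (2*n + 2*m) ×ˢ Finset.Icc (-2 : ℤ) (2*n + 2*m)).filter
    (fun p => (m : ℤ) - 1 ≤ p.1 + p.2 ∧ p.1 + p.2 ≤ 2*n + m - 1 ∧ |p.1 - p.2| ≤ m)

/-- The Hopi rectangle graph `HD(m,n)`: vertices are the points of `HDverts m n`,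
and `(i,j)` is adjacent to `(i',j')` iff `|i - i'| + |j - j'| = 1`. -/
def HD (m n : ℕ) : SimpleGraph {p : ℤ × ℤ // p ∈ HDverts m n} where
  Adj u v := |u.val.1 - v.val.1| + |u.val.2 - v.val.2| = 1
  symm := by
    refine ⟨?_⟩
    intro u v h
    show |v.val.1 - u.val.1| + |v.val.2 - u.val.2| = 1
    rw [abs_sub_comm v.val.1 u.val.1, abs_sub_comm v.val.2 u.val.2]
    exact h
  loopless := by refine ⟨?_⟩; intro u h; simp at h

/-- The set `B = {(i,j) : i + j = m - 1} ∪ {(i,j) : j = i + m}` of vertices of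
`HD(m,n)`. -/
def HDB (m n : ℕ) : Set {p : ℤ × ℤ // p ∈ HDverts m n} :=
  {v | v.val.1 + v.val.2 = (m : ℤ) - 1} ∪ {v | v.val.2 = v.val.1 + (m : ℤ)}

/-! Every vertex of `HD(m,n)` has first coordinate `i ≥ 0`. A vertex `v = (i,j)` outside `B`
has its left neighbour `(i-1,j)` in the graph (as `i+j ≠ m-1` and `j ≠ i+m`), and the other
neighbours of `(i-1,j)` have first coordinate at most `i-1`. So, by induction on `i`, once all
vertices with smaller first coordinate are blue, `(i-1,j)` forces `v`. The set `B` consists of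
the `m` points `(i, m-1-i)`, `0 ≤ i < m`, and the `n` points `(i, i+m)`, `0 ≤ i < n`. -/

section ZeroForcing

variable {V : Type*} {G : SimpleGraph V} {L B : Set V}

lemma monotone_iterate_zfStep : Monotone fun k => (zfStep G L)^[k] B :=
  fun _ _ hkl => Function.monotone_iterate_of_id_le (fun _ => Set.subset_union_left) hkl B

lemma subset_zfClosure : B ⊆ zfClosure G L B :=
  Set.subset_iUnion (fun k => (zfStep G L)^[k] B) 0

lemma exists_subset_iterate_zfStep {S : Set V} (hS : S.Finite) (hSB : S ⊆ zfClosure G L B) :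
    ∃ k, S ⊆ (zfStep G L)^[k] B := by
  have hdir : Directed (· ⊆ ·) fun k => (zfStep G L)^[k] B := monotone_iterate_zfStep.directed_le
  simpa using hdir.exists_mem_subset_of_finset_subset_biUnion (s := hS.toFinset)
    (by simpa [zfClosure] using hSB)

lemma mem_zfClosure_of_forces {u v : V} (hfin : (G.neighborSet u).Finite)
    (hu : u ∈ zfClosure G L B) (huL : u ∉ L) (huv : G.Adj u v)
    (hothers : ∀ w, G.Adj u w → w ≠ v → w ∈ zfClosure G L B) :
    v ∈ zfClosure G L B := by
  obtain ⟨k, hk⟩ := exists_subset_iterate_zfStep ((hfin.sdiff (t := {v})).insert u) <| by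
    rintro w (rfl | ⟨huw, hwv⟩)
    exacts [hu, hothers w huw hwv]
  refine Set.mem_iUnion.2 ⟨k + 1, ?_⟩
  rw [Function.iterate_succ_apply']
  refine Or.inr ⟨u, hk (Set.mem_insert u _), huL, huv, fun w huw hw => ?_⟩
  by_contra hwv
  exact hw (hk (Set.mem_insert_of_mem u ⟨huw, hwv⟩))

end ZeroForcing

lemma Int.abs_add_abs_eq_one {a b : ℤ} (h : |a| + |b| = 1) :
    (a = 1 ∧ b = 0) ∨ (a = -1 ∧ b = 0) ∨ (a = 0 ∧ b = 1) ∨ (a = 0 ∧ b = -1) := by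
  rcases abs_cases a with ⟨ha, _⟩ | ⟨ha, _⟩ <;> rcases abs_cases b with ⟨hb, _⟩ | ⟨hb, _⟩ <;> omega

section HopiRectangle

variable {m n : ℕ}

lemma mem_HDverts {p : ℤ × ℤ} :
    p ∈ HDverts m n ↔ (m : ℤ) - 1 ≤ p.1 + p.2 ∧ p.1 + p.2 ≤ 2 * n + m - 1 ∧
      -(m : ℤ) ≤ p.1 - p.2 ∧ p.1 - p.2 ≤ m := by
  simp only [HDverts, Finset.mem_filter, Finset.mem_product, Finset.mem_Icc, abs_le]
  constructor
  · rintro ⟨-, h⟩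
    exact h
  · rintro ⟨h₁, h₂, h₃, h₄⟩
    exact ⟨⟨⟨by omega, by omega⟩, by omega, by omega⟩, h₁, h₂, h₃, h₄⟩

lemma fst_nonneg_of_mem_HDverts {p : ℤ × ℤ} (hp : p ∈ HDverts m n) : 0 ≤ p.1 := by
  have := mem_HDverts.1 hp
  omega

lemma mem_zfClosure_HDB_of_fst_lt (k : ℕ) (v : {p : ℤ × ℤ // p ∈ HDverts m n})
    (hvk : v.val.1 < k) : v ∈ zfClosure (HD m n) ∅ (HDB m n) := by
  induction k generalizing v with
  | zero => exact absurd hvk (not_lt.2 (fst_nonneg_of_mem_HDverts v.2))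
  | succ k ih =>
    by_cases hvB : v ∈ HDB m n
    · exact subset_zfClosure hvB
    simp only [HDB, Set.mem_union, Set.mem_ofPred_eq, not_or] at hvB
    have hv := mem_HDverts.1 v.2
    push_cast at hvk
    have hleft : (v.val.1 - 1, v.val.2) ∈ HDverts m n := mem_HDverts.2 (by omega)
    refine mem_zfClosure_of_forces (u := ⟨_, hleft⟩) (Set.toFinite _) (ih _ (by dsimp only; omega))
      (Set.notMem_empty _) (by simp [HD]) fun w huw hwv => ih w ?_
    change |(v.val.1 - 1) - w.val.1| + |v.val.2 - w.val.2| = 1 at huw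
    rcases Int.abs_add_abs_eq_one huw with ⟨h₁, -⟩ | ⟨h₁, h₂⟩ | ⟨h₁, -⟩ | ⟨h₁, -⟩
    case inr.inl => exact absurd (Subtype.ext (Prod.ext (by omega) (by omega))) hwv
    all_goals omega

lemma isZeroForcingSet_HDB : IsZeroForcingSet (HD m n) (HDB m n) :=
  Set.eq_univ_of_forall fun v =>
    mem_zfClosure_HDB_of_fst_lt (v.val.1.toNat + 1) v (by push_cast; omega)

lemma image_val_HDB : Subtype.val '' HDB m n =
    ↑((Finset.Ico 0 (m : ℤ)).image (fun i => (i, (m : ℤ) - 1 - i)) ∪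
      (Finset.Ico 0 (n : ℤ)).image (fun i => (i, i + (m : ℤ)))) := by
  ext ⟨i, j⟩
  simp only [HDB, Set.mem_image, Subtype.exists, exists_and_right, exists_eq_right, mem_HDverts,
    Set.mem_union, Set.mem_ofPred_eq, Finset.coe_union, Finset.coe_image, Finset.coe_Ico,
    Set.mem_Ico, Prod.mk.injEq, exists_prop]
  constructor
  · rintro ⟨hv, hB | hB⟩
    exacts [Or.inl ⟨i, by omega, rfl, by omega⟩, Or.inr ⟨i, by omega, rfl, by omega⟩]
  · rintro (⟨i, hi, rfl, rfl⟩ | ⟨i, hi, rfl, rfl⟩) <;> omega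

lemma ncard_HDB : (HDB m n).ncard = m + n := by
  have hdisj : Disjoint ((Finset.Ico 0 (m : ℤ)).image (fun i => (i, (m : ℤ) - 1 - i)))
      ((Finset.Ico 0 (n : ℤ)).image (fun i => (i, i + (m : ℤ)))) := by
    simp only [Finset.disjoint_left, Finset.mem_image, forall_exists_index, and_imp]
    rintro _ i - rfl ⟨j, -, hji⟩
    simp only [Prod.mk.injEq] at hji
    omega
  rw [← Set.ncard_image_of_injective _ Subtype.val_injective, image_val_HDB, Set.ncard_coe_finset,
    Finset.card_union_of_disjoint hdisj,
    Finset.card_image_of_injective _ (Function.LeftInverse.injective (g := Prod.fst) fun _ => rfl),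
    Finset.card_image_of_injective _ (Function.LeftInverse.injective (g := Prod.fst) fun _ => rfl),
    Int.card_Ico, Int.card_Ico]
  simp

end HopiRectangle

theorem HDB_is_zero_forcing_general (m n : ℕ) :
    (HDB m n).ncard = m + n ∧ IsZeroForcingSet (HD m n) (HDB m n) ∧
      zfNumber (HD m n) ≤ m + n :=
  ⟨ncard_HDB, isZeroForcingSet_HDB, Nat.sInf_le ⟨HDB m n, isZeroForcingSet_HDB, ncard_HDB⟩⟩

/-- The set `B = {(i,j) : i + j = m - 1} ∪ {(i,j) : j = i + m}` has cardinality
`m + n` and is a zero forcing set of `HD(m,n)`; in particular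
`Z(HD(m,n)) ≤ m + n`. -/
theorem HDB_is_zero_forcing (m n : ℕ) (hm : 0 < m) (hn : 0 < n) :
    (HDB m n).ncard = m + n ∧ IsZeroForcingSet (HD m n) (HDB m n) ∧
      zfNumber (HD m n) ≤ m + n :=
  HDB_is_zero_forcing_general m n
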